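/- Weak Deduction Theorem for F_[→]: for all formulas A, B of the implicational language, {A} ⊢_{F_[→]} B if and only if ⊢_{F_[→]} A→B. -/
import Mathlib

/-- Implicational formulas: built from propositional variables using only `→`. -/
inductive Fm : Type
  | var : ℕ → Fm
  | imp : Fm → Fm → Fm

/-- `chain [A₁,…,Aₙ] E` is the formula `A₁→(A₂→(⋯→(Aₙ→E)⋯))` (and `E` when n = 0). -/
def chain : List Fm → Fm → Fm
  | [], E => E
  | A :: L, E => Fm.imp A (chain L E)

/-- Theorems of the Hilbert system `F_[→]`. -/
inductive FThm : Fm → Prop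
  | id (A : Fm) : FThm (A.imp A)
  | mp {A B : Fm} : FThm A → FThm (A.imp B) → FThm B
  | afort {A : Fm} (B : Fm) : FThm A → FThm (B.imp A)
  | rule4 {L : List Fm} {B C D : Fm} :
      FThm (chain L (B.imp C)) → FThm (chain L (C.imp D)) →
      FThm (chain L (B.imp D))

/-- Derivations from assumptions in `F_[→]`: members of `Γ` and theorems may be used;
rules (3) and (4) only apply to theorems; modus ponens only with a theorem major premise. -/
inductive FDeriv (Γ : Set Fm) : Fm → Prop
  | hyp {A : Fm} : A ∈ Γ → FDeriv Γ A
  | thm {A : Fm} : FThm A → FDeriv Γ A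
  | wmp {A B : Fm} : FDeriv Γ A → FThm (A.imp B) → FDeriv Γ B

/-- Weak Deduction Theorem for `F_[→]`: `{A} ⊢ B` iff `⊢ A → B`. -/
theorem weak_deduction_F (A B : Fm) :
    FDeriv ({A} : Set Fm) B ↔ FThm (A.imp B) := by
  constructor
  · intro h
    induction h with
    | hyp hm => cases hm; exact FThm.id A
    | thm ht => exact FThm.afort A ht
    | wmp _ h2 ih => exact FThm.rule4 (L := []) ih h2
  · intro h
    exact FDeriv.wmp (FDeriv.hyp rfl) h
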